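/- arXiv:2304.12992 — 2 statements merged into one kernel-verified Lean document; each statement's English description precedes it below -/
import Mathlib

section
/- Let A ∈ ℝ^{m×n} have linearly independent columns, let k ≥ 1, and let 𝒜 ∈ ℝ^{(k+1)m×(kn+m)} be the k-commodity constraint matrix built from A. Let d₁,…,d_{k+1} ∈ ℝ^m be entrywise positive vectors, D_i = diag(d_i), D_Σ = Σ_{i=1}^{k+1} D_i, and let D ∈ ℝ^{(k+1)m×(k+1)m} be the block-diagonal matrix with diagonal blocks D₁,…,D_{k+1}. Define E ∈ ℝ^{kn×kn} as the k×k block matrix whose (i,j) block is (Aᵀ D_i A if i = j, else 0) − Aᵀ D_i D_Σ⁻¹ D_j A. Then 𝒜ᵀ D 𝒜 and E are invertible, and (𝒜ᵀ D 𝒜)⁻¹ = L · diag(E⁻¹, I_m) · R, where L ∈ ℝ^{(kn+m)×(kn+m)} is the block lower-triangular matrix with identity blocks I_n on the first k diagonal positions, I_m on the last diagonal position, and bottom blocks −D_Σ⁻¹ D_j A in the (k+1, j) position for 1 ≤ j ≤ k, and R ∈ ℝ^{(kn+m)×(kn+m)} is the block upper-triangular matrix with identity blocks I_n on the first k diagonal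 positions, D_Σ⁻¹ on the last diagonal position, and right-column blocks −Aᵀ D_i D_Σ⁻¹ in the (i, k+1) position for 1 ≤ i ≤ k. -/
/-! Splitting the columns of `𝒜` into the `k` commodity blocks and the `m` slack columns, the
Gram matrix is `𝒜ᵀ D 𝒜 = [[B, Kᵀ], [K, D_Σ]]` with `B` the block diagonal of the `Aᵀ D_i A`
and `K = [D₁A ⋯ D_kA]`, so `E = B - Kᵀ D_Σ⁻¹ K` is the Schur complement of `D_Σ`. Since the
last block row of `𝒜` is `[0 ⋯ 0 I]` and `A` is injective, `𝒜` is injective, so `𝒜ᵀ D 𝒜` is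
positive definite; `det (𝒜ᵀ D 𝒜) = det D_Σ * det E` then makes `E` invertible, and inverting the
block LDU factorization gives the formula. -/

open Matrix

/-- The `k`-commodity constraint matrix built from `A ∈ ℝ^{m×n}`. -/
def commodityMatrix {m n : ℕ} (k : ℕ) (A : Matrix (Fin m) (Fin n) ℝ) :
    Matrix (Fin (k + 1) × Fin m) ((Fin k × Fin n) ⊕ Fin m) ℝ :=
  Matrix.of fun p q =>
    match q with
    | Sum.inl (j, v) => if (p.1 : ℕ) = (j : ℕ) then A p.2 v else 0
    | Sum.inr e' => if p.2 = e' then 1 else 0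

/-- The `kn × kn` Schur-complement matrix `E`: its `(i,j)` block is
`(Aᵀ D_i A if i = j, else 0) − Aᵀ D_i D_Σ⁻¹ D_j A`, where `D_i = diag(d_i)` and
`D_Σ = diag(∑ i, d_i)`. -/
noncomputable def schurE {m n : ℕ} (k : ℕ) (A : Matrix (Fin m) (Fin n) ℝ)
    (d : Fin (k + 1) → Fin m → ℝ) : Matrix (Fin k × Fin n) (Fin k × Fin n) ℝ :=
  Matrix.of fun p q =>
    (if p.1 = q.1 then (Aᵀ * Matrix.diagonal (d p.1.castSucc) * A) p.2 q.2 else 0) -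
      (Aᵀ * Matrix.diagonal (d p.1.castSucc) *
        (Matrix.diagonal fun e : Fin m => ∑ i, d i e)⁻¹ *
        Matrix.diagonal (d q.1.castSucc) * A) p.2 q.2

namespace Matrix

variable {α : Type*} [Field α] {m n : Type*} [Fintype m] [Fintype n] [DecidableEq m]
  [DecidableEq n]

theorem isUnit_sub_of_isUnit_fromBlocks₂₂ {P : Matrix m m α} {B : Matrix m n α}
    {C : Matrix n m α} {S : Matrix n n α} (h : IsUnit (fromBlocks P B C S)) (hS : IsUnit S) :
    IsUnit (P - B * S⁻¹ * C) := by
  have := hS.invertible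
  rw [isUnit_iff_isUnit_det, det_fromBlocks₂₂, invOf_eq_nonsing_inv] at h
  exact (isUnit_iff_isUnit_det _).2 (isUnit_of_mul_isUnit_right h)

theorem inv_fromBlocks_eq_of_isUnit₂₂ (P : Matrix m m α) (B : Matrix m n α) (C : Matrix n m α)
    {S : Matrix n n α} (hS : IsUnit S) (hE : IsUnit (P - B * S⁻¹ * C)) :
    (fromBlocks P B C S)⁻¹ =
      fromBlocks 1 0 (-(S⁻¹ * C)) 1 * fromBlocks (P - B * S⁻¹ * C)⁻¹ 0 0 1 *
        fromBlocks 1 (-(B * S⁻¹)) 0 S⁻¹ := by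
  have := hS.invertible
  rw [fromBlocks_eq_of_invertible₂₂, invOf_eq_nonsing_inv, Matrix.mul_inv_rev, Matrix.mul_inv_rev,
    inv_fromBlocks_zero₂₁_of_isUnit_iff _ _ _ (iff_of_true hE hS),
    inv_fromBlocks_zero₂₁_of_isUnit_iff _ _ _ (iff_of_true isUnit_one isUnit_one),
    inv_fromBlocks_zero₁₂_of_isUnit_iff _ _ _ (iff_of_true isUnit_one isUnit_one)]
  simp only [inv_one, Matrix.one_mul, Matrix.mul_one, Matrix.mul_zero, Matrix.zero_mul, neg_zero,
    Matrix.mul_assoc, fromBlocks_multiply, add_zero, zero_add]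

end Matrix

section Commodity

variable {m n k : ℕ} (A : Matrix (Fin m) (Fin n) ℝ) (d : Fin (k + 1) → Fin m → ℝ)

def commodityBlockGram : Matrix (Fin k × Fin n) (Fin k × Fin n) ℝ :=
  of fun p q => if p.1 = q.1 then (Aᵀ * diagonal (d p.1.castSucc) * A) p.2 q.2 else 0

def commodityCoupling : Matrix (Fin m) (Fin k × Fin n) ℝ :=
  of fun e q => (diagonal (d q.1.castSucc) * A) e q.2

theorem commodityMatrix_apply_inl (i : Fin (k + 1)) (e : Fin m) (j : Fin k) (v : Fin n) :
    commodityMatrix k A (i, e) (Sum.inl (j, v)) = if i = j.castSucc then A e v else 0 := by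
  simp [commodityMatrix, Fin.ext_iff]

theorem commodityMatrix_apply_inr (i : Fin (k + 1)) (e e' : Fin m) :
    commodityMatrix k A (i, e) (Sum.inr e') = (1 : Matrix (Fin m) (Fin m) ℝ) e e' := by
  simp [commodityMatrix, one_apply]

theorem commodityMatrix_mulVec_apply (z : (Fin k × Fin n) ⊕ Fin m → ℝ) (i : Fin (k + 1))
    (e : Fin m) :
    (commodityMatrix k A *ᵥ z) (i, e) =
      (∑ j : Fin k, if i = j.castSucc then (A *ᵥ fun v => z (Sum.inl (j, v))) e else 0) +
        z (Sum.inr e) := by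
  simp [mulVec, dotProduct, Fintype.sum_sum_type, Fintype.sum_prod_type,
    commodityMatrix_apply_inl, commodityMatrix_apply_inr, one_apply]

theorem commodityMatrix_mulVec_injective (hA : ∀ y : Fin n → ℝ, A *ᵥ y = 0 → y = 0) :
    Function.Injective (commodityMatrix k A).mulVec := by
  refine (injective_iff_map_eq_zero (commodityMatrix k A).mulVecLin).2 fun z hz => ?_
  rw [mulVecLin_apply] at hz
  have hlast (e : Fin m) : z (Sum.inr e) = 0 := by
    simpa [commodityMatrix_mulVec_apply, (Fin.castSucc_ne_last _).symm] using
      congrFun hz (Fin.last k, e)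
  have hblock (j : Fin k) : (fun v => z (Sum.inl (j, v))) = 0 :=
    hA _ (funext fun e => by
      simpa [commodityMatrix_mulVec_apply, hlast] using congrFun hz (j.castSucc, e))
  ext (⟨j, v⟩ | e)
  exacts [congrFun (hblock j) v, hlast e]

theorem commodityGram_posDef (hA : ∀ y : Fin n → ℝ, A *ᵥ y = 0 → y = 0)
    (hd : ∀ i e, 0 < d i e) :
    ((commodityMatrix k A)ᵀ * diagonal (fun p : Fin (k + 1) × Fin m => d p.1 p.2) *
      commodityMatrix k A).PosDef := by
  simpa [conjTranspose_eq_transpose_of_trivial] using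
    (PosDef.diagonal fun p => hd p.1 p.2).conjTranspose_mul_mul_same
      (commodityMatrix_mulVec_injective A hA)

theorem commodityMatrix_transpose_mul_diagonal_mul :
    (commodityMatrix k A)ᵀ * diagonal (fun p : Fin (k + 1) × Fin m => d p.1 p.2) *
        commodityMatrix k A =
      fromBlocks (commodityBlockGram A d) (commodityCoupling A d)ᵀ (commodityCoupling A d)
        (diagonal fun e => ∑ i, d i e) := by
  ext (⟨i, u⟩ | e) (⟨j, v⟩ | e') <;>
    simp only [Matrix.mul_apply, transpose_apply, diagonal_apply, one_apply, of_apply,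
      commodityMatrix_apply_inl, commodityMatrix_apply_inr, commodityBlockGram, commodityCoupling,
      fromBlocks_apply₁₁, fromBlocks_apply₁₂, fromBlocks_apply₂₁, fromBlocks_apply₂₂,
      Fintype.sum_prod_type, mul_ite, ite_mul, mul_zero, zero_mul, mul_one, one_mul,
      Finset.sum_ite_eq, Finset.sum_ite_eq', Finset.sum_ite_irrel, Finset.sum_const_zero,
      Finset.mem_univ, ↓reduceIte, Fin.castSucc_inj]
  · rcases eq_or_ne i j with rfl | hij
    · simp
    · simp [hij, hij.symm]
  · ring
  · rcases eq_or_ne e e' with rfl | hee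
    · simp
    · simp [hee, hee.symm]

theorem schurE_eq_sub :
    schurE k A d = commodityBlockGram A d -
      (commodityCoupling A d)ᵀ * (diagonal fun e => ∑ i, d i e)⁻¹ * commodityCoupling A d := by
  ext p q
  simp only [schurE, commodityBlockGram, Matrix.sub_apply, of_apply]
  congr 1
  change _ = ((diagonal (d p.1.castSucc) * A)ᵀ * (diagonal fun e => ∑ i, d i e)⁻¹ *
    (diagonal (d q.1.castSucc) * A)) p.2 q.2
  rw [transpose_mul, diagonal_transpose]
  simp only [Matrix.mul_assoc]

theorem mul_commodityCoupling (X : Matrix (Fin m) (Fin m) ℝ) :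
    X * commodityCoupling A d = of fun e q => (X * diagonal (d q.1.castSucc) * A) e q.2 := by
  ext e q
  exact congrFun₂ (Matrix.mul_assoc X _ A).symm e q.2

theorem commodityCoupling_transpose_mul (X : Matrix (Fin m) (Fin m) ℝ) :
    (commodityCoupling A d)ᵀ * X = of fun p e => (Aᵀ * diagonal (d p.1.castSucc) * X) p.2 e := by
  ext p e
  change ((diagonal (d p.1.castSucc) * A)ᵀ * X) p.2 e = _
  rw [transpose_mul, diagonal_transpose]
  rfl

end Commodity

theorem commodity_gram_inverse_general {m n k : ℕ}
    (A : Matrix (Fin m) (Fin n) ℝ)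
    (hA : ∀ y : Fin n → ℝ, A *ᵥ y = 0 → y = 0)
    (d : Fin (k + 1) → Fin m → ℝ) (hd : ∀ i e, 0 < d i e) :
    IsUnit ((commodityMatrix k A)ᵀ *
        Matrix.diagonal (fun p : Fin (k + 1) × Fin m => d p.1 p.2) * commodityMatrix k A) ∧
    IsUnit (schurE k A d) ∧
    ((commodityMatrix k A)ᵀ *
          Matrix.diagonal (fun p : Fin (k + 1) × Fin m => d p.1 p.2) *
          commodityMatrix k A)⁻¹ =
      Matrix.fromBlocks 1 0
          (Matrix.of fun (e : Fin m) (q : Fin k × Fin n) =>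
            -(((Matrix.diagonal fun e' : Fin m => ∑ i, d i e')⁻¹ *
                Matrix.diagonal (d q.1.castSucc) * A) e q.2)) 1 *
        Matrix.fromBlocks (schurE k A d)⁻¹ 0 0 1 *
        Matrix.fromBlocks 1
          (Matrix.of fun (p : Fin k × Fin n) (e : Fin m) =>
            -((Aᵀ * Matrix.diagonal (d p.1.castSucc) *
                (Matrix.diagonal fun e' : Fin m => ∑ i, d i e')⁻¹) p.2 e)) 0
          (Matrix.diagonal fun e' : Fin m => ∑ i, d i e')⁻¹ := by
  have hS : IsUnit (diagonal fun e => ∑ i, d i e) :=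
    isUnit_diagonal.2 <| Pi.isUnit_iff.2 fun e =>
      (Finset.sum_pos (fun i _ => hd i e) Finset.univ_nonempty).ne'.isUnit
  have hM := (commodityGram_posDef A d hA hd).isUnit
  rw [commodityMatrix_transpose_mul_diagonal_mul] at hM ⊢
  have hE := isUnit_sub_of_isUnit_fromBlocks₂₂ hM hS
  refine ⟨hM, schurE_eq_sub A d ▸ hE, ?_⟩
  rw [inv_fromBlocks_eq_of_isUnit₂₂ _ _ _ hS hE, ← schurE_eq_sub, mul_commodityCoupling,
    commodityCoupling_transpose_mul]
  rfl

/-- if `A` has linearly independent columns and each `d_i` is entrywise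
positive, then `𝒜ᵀ D 𝒜` and `E` are invertible, and
`(𝒜ᵀ D 𝒜)⁻¹ = L * diag(E⁻¹, I_m) * R` where `L` is block lower-triangular with identity
diagonal blocks and bottom blocks `−D_Σ⁻¹ D_j A`, and `R` is block upper-triangular with
identity blocks on the first `k` diagonal positions, `D_Σ⁻¹` on the last, and
right-column blocks `−Aᵀ D_i D_Σ⁻¹`. -/
theorem commodity_gram_inverse {m n k : ℕ} (hk : 1 ≤ k)
    (A : Matrix (Fin m) (Fin n) ℝ)
    (hA : ∀ y : Fin n → ℝ, A *ᵥ y = 0 → y = 0)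
    (d : Fin (k + 1) → Fin m → ℝ) (hd : ∀ i e, 0 < d i e) :
    IsUnit ((commodityMatrix k A)ᵀ *
        Matrix.diagonal (fun p : Fin (k + 1) × Fin m => d p.1 p.2) * commodityMatrix k A) ∧
    IsUnit (schurE k A d) ∧
    ((commodityMatrix k A)ᵀ *
          Matrix.diagonal (fun p : Fin (k + 1) × Fin m => d p.1 p.2) *
          commodityMatrix k A)⁻¹ =
      Matrix.fromBlocks 1 0
          (Matrix.of fun (e : Fin m) (q : Fin k × Fin n) =>
            -(((Matrix.diagonal fun e' : Fin m => ∑ i, d i e')⁻¹ *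
                Matrix.diagonal (d q.1.castSucc) * A) e q.2)) 1 *
        Matrix.fromBlocks (schurE k A d)⁻¹ 0 0 1 *
        Matrix.fromBlocks 1
          (Matrix.of fun (p : Fin k × Fin n) (e : Fin m) =>
            -((Aᵀ * Matrix.diagonal (d p.1.castSucc) *
                (Matrix.diagonal fun e' : Fin m => ∑ i, d i e')⁻¹) p.2 e)) 0
          (Matrix.diagonal fun e' : Fin m => ∑ i, d i e')⁻¹ :=
  commodity_gram_inverse_general A hA d hd
end

section
/- Let A ∈ ℝ^{m×n}, let k ≥ 1, let v₁,…,v_k ∈ ℝ^n and set v_{k+1} = 0 ∈ ℝ^n. Let w ∈ ℝ^m, let x̄₁,…,x̄_{k+1}, s̄₁,…,s̄_{k+1} ∈ ℝ^m be entrywise positive, set d_i = x̄_i/s̄_i (entrywise) for i = 1,…,k+1 and d_Σ = Σ_{i=1}^{k+1} d_i, and let μ > 0 satisfy x̄_i(e)·s̄_i(e) ≈_{1/5} μ for all i and all coordinates e. Suppose that for some ε ≥ 0, Σ_{i=1}^{k+1} ‖ (1/s̄_i) · (w + Σ_{j=1}^{k+1} (d_j/d_Σ) · A(v_i − v_j))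 ‖₂² ≤ ε². Then Σ_{i=1}^{k+1} Σ_{j=1}^{k+1} ‖ (1/s̄_i) · (d_j/d_Σ) · A(v_i − v_j) ‖₂² ≤ 6ε², and Σ_{i=1}^{k+1} ‖ w/s̄_i ‖₂² ≤ 2ε². -/
/-! Fix a coordinate `e` and write `c i = s̄ᵢ(e)⁻²`, `d i = x̄ᵢ(e) / s̄ᵢ(e)`, `t i = (A vᵢ)(e)`.
Centrality says `d i ≈ μ c i` up to the factor `q = exp (1/5)`, and the inner sum
`∑ⱼ (dⱼ / d_Σ) (tᵢ - tⱼ)` is `zᵢ = tᵢ - t̄` for the `d`-weighted mean `t̄`, so `∑ᵢ dᵢ zᵢ = 0`.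
Expanding the hypothesis, the cross term `2 w ∑ cᵢ zᵢ = 2 w ∑ (cᵢ - dᵢ/μ) zᵢ` is small, which gives
`(3 - 2q) ∑ cᵢ w² + (3 - q)/2 ∑ cᵢ zᵢ² ≤ ε²`. The pair sum is at most `(1 + q)² ∑ cᵢ zᵢ²` by
`(a - b)² ≤ (1 + q) a² + (1 + 1/q) b²`, and `q ≤ 5/4` turns these into the constants `6` and `2`. -/

open Matrix Finset

def approx (ε a b : ℝ) : Prop := Real.exp (-ε) * a ≤ b ∧ b ≤ Real.exp ε * a

theorem sq_sub_le_one_add_mul_sq_add {q : ℝ} (hq : 0 < q) (a b : ℝ) :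
    (a - b) ^ 2 ≤ (1 + q) * a ^ 2 + (1 + q⁻¹) * b ^ 2 := by
  have key : (1 + q) * a ^ 2 + (1 + q⁻¹) * b ^ 2 - (a - b) ^ 2 = (q * a + b) ^ 2 / q := by
    field_simp
    ring
  nlinarith [div_nonneg (sq_nonneg (q * a + b)) hq.le]

section Weights

variable {ι : Type*} [Fintype ι] {c d : ι → ℝ} {μ q : ℝ}

theorem sum_div_sum_sq_le_one (hd : ∀ i, 0 ≤ d i) : ∑ j, (d j / ∑ l, d l) ^ 2 ≤ 1 := by
  have hle : ∀ j, d j / ∑ l, d l ≤ 1 := fun j =>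
    div_le_one_of_le₀ (single_le_sum (fun i _ => hd i) (mem_univ j)) (sum_nonneg fun i _ => hd i)
  calc ∑ j, (d j / ∑ l, d l) ^ 2 ≤ ∑ j, d j / ∑ l, d l :=
        sum_le_sum fun j _ => by
          have h0 := div_nonneg (hd j) (sum_nonneg fun i _ => hd i : 0 ≤ ∑ l, d l)
          nlinarith [hle j]
    _ = (∑ j, d j) / ∑ l, d l := by rw [sum_div]
    _ ≤ 1 := div_self_le_one _

theorem sum_mul_sum_div_sum_sq_mul_sq_le [Nonempty ι] (hμ : 0 < μ) (hq : 0 ≤ q)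
    (hd : ∀ i, 0 < d i) (hcd : ∀ i, μ * c i ≤ q * d i) (hdc : ∀ i, d i ≤ q * (μ * c i))
    (z : ι → ℝ) :
    (∑ i, c i) * ∑ j, (d j / ∑ l, d l) ^ 2 * z j ^ 2 ≤ q ^ 2 * ∑ j, c j * z j ^ 2 := by
  set D := ∑ l, d l
  have hD : 0 < D := sum_pos (fun i _ => hd i) univ_nonempty
  have hsum_c : ∑ i, c i ≤ q * D / μ := by
    rw [le_div_iff₀ hμ, sum_mul, mul_sum]
    exact sum_le_sum fun i _ => by linarith [hcd i]
  have hterm : ∀ j, (d j / D) ^ 2 * z j ^ 2 ≤ q * μ / D * (c j * z j ^ 2) := fun j => by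
    have hdD : d j ≤ D := single_le_sum (fun i _ => (hd i).le) (mem_univ j)
    have hdd : d j * d j ≤ q * (μ * c j) * D :=
      mul_le_mul (hdc j) hdD (hd j).le ((hd j).le.trans (hdc j))
    rw [show (d j / D) ^ 2 * z j ^ 2 = d j * d j * z j ^ 2 / D ^ 2 by ring,
      show q * μ / D * (c j * z j ^ 2) = q * (μ * c j) * D * z j ^ 2 / D ^ 2 by field_simp]
    gcongr
  calc (∑ i, c i) * ∑ j, (d j / D) ^ 2 * z j ^ 2
      ≤ q * D / μ * (q * μ / D * ∑ j, c j * z j ^ 2) := by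
        rw [mul_sum univ _ (q * μ / D)]
        exact mul_le_mul hsum_c (sum_le_sum fun j _ => hterm j)
          (sum_nonneg fun j _ => by positivity) (by positivity)
    _ = q ^ 2 * ∑ j, c j * z j ^ 2 := by field_simp

theorem sum_sum_mul_div_sum_sq_mul_sub_sq_le [Nonempty ι] (hμ : 0 < μ) (hq : 0 < q)
    (hc : ∀ i, 0 ≤ c i) (hd : ∀ i, 0 < d i) (hcd : ∀ i, μ * c i ≤ q * d i)
    (hdc : ∀ i, d i ≤ q * (μ * c i)) (z : ι → ℝ) :
    ∑ i, ∑ j, c i * (d j / ∑ l, d l) ^ 2 * (z i - z j) ^ 2 ≤ (1 + q) ^ 2 * ∑ i, c i * z i ^ 2 := by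
  set D := ∑ l, d l
  set S := ∑ i, c i * z i ^ 2
  have hS : 0 ≤ S := sum_nonneg fun i _ => mul_nonneg (hc i) (sq_nonneg _)
  calc ∑ i, ∑ j, c i * (d j / D) ^ 2 * (z i - z j) ^ 2
      ≤ ∑ i, ∑ j, ((1 + q) * (c i * z i ^ 2 * (d j / D) ^ 2)
          + (1 + q⁻¹) * (c i * ((d j / D) ^ 2 * z j ^ 2))) :=
        sum_le_sum fun i _ => sum_le_sum fun j _ => by
          have hij := mul_le_mul_of_nonneg_left (sq_sub_le_one_add_mul_sq_add hq (z i) (z j))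
            (mul_nonneg (hc i) (sq_nonneg (d j / D)))
          linarith
    _ = (1 + q) * (S * ∑ j, (d j / D) ^ 2)
          + (1 + q⁻¹) * ((∑ i, c i) * ∑ j, (d j / D) ^ 2 * z j ^ 2) := by
        rw [sum_mul_sum, sum_mul_sum, mul_sum, mul_sum, ← sum_add_distrib]
        exact sum_congr rfl fun i _ => by rw [sum_add_distrib, mul_sum, mul_sum]
    _ ≤ (1 + q) * (S * 1) + (1 + q⁻¹) * (q ^ 2 * S) := by
        have hweights := sum_div_sum_sq_le_one fun i => (hd i).le
        have hcross := sum_mul_sum_div_sum_sq_mul_sq_le hμ hq.le hd hcd hdc z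
        gcongr
    _ = (1 + q) ^ 2 * S := by field_simp; ring

theorem neg_le_two_mul_mul_mul_of_abs_le {x r : ℝ} (hx : |x| ≤ r) (p z : ℝ) :
    -(r * (2 * p ^ 2 + z ^ 2 / 2)) ≤ 2 * p * z * x := by
  obtain ⟨hlo, hhi⟩ := abs_le.mp hx
  nlinarith [mul_nonneg (by linarith : 0 ≤ r + x) (sq_nonneg (2 * p + z)),
    mul_nonneg (by linarith : 0 ≤ r - x) (sq_nonneg (2 * p - z))]

theorem le_sum_mul_add_sq (hμ : 0 < μ) (hq : 1 ≤ q)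
    (hcd : ∀ i, μ * c i ≤ q * d i) (hdc : ∀ i, d i ≤ q * (μ * c i))
    (p : ℝ) (z : ι → ℝ) (hz : ∑ i, d i * z i = 0) :
    (3 - 2 * q) * ∑ i, c i * p ^ 2 + (3 - q) / 2 * ∑ i, c i * z i ^ 2
      ≤ ∑ i, c i * (p + z i) ^ 2 := by
  -- Adding `2p/μ · dᵢ zᵢ` costs nothing in the sum and turns the cross term `2p cᵢ zᵢ` into
  -- `2p (cᵢ - dᵢ/μ) zᵢ`, which centrality makes small.
  have hterm : ∀ i, (3 - 2 * q) * (c i * p ^ 2) + (3 - q) / 2 * (c i * z i ^ 2)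
      + 2 * p / μ * (d i * z i) ≤ c i * (p + z i) ^ 2 := fun i => by
    have hx : |c i - d i / μ| ≤ (q - 1) * c i := by
      have h1 : d i / μ ≤ q * c i := by rw [div_le_iff₀ hμ]; linarith [hdc i]
      have h2 : c i ≤ q * (d i / μ) := by rw [mul_div_assoc', le_div_iff₀ hμ]; linarith [hcd i]
      rw [abs_le]
      constructor <;> nlinarith
    have hcross := neg_le_two_mul_mul_mul_of_abs_le hx p (z i)
    have hexpand : c i * (p + z i) ^ 2 - ((3 - 2 * q) * (c i * p ^ 2)
        + (3 - q) / 2 * (c i * z i ^ 2) + 2 * p / μ * (d i * z i))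
        = (q - 1) * c i * (2 * p ^ 2 + z i ^ 2 / 2) + 2 * p * z i * (c i - d i / μ) := by
      field_simp
      ring
    linarith
  calc (3 - 2 * q) * ∑ i, c i * p ^ 2 + (3 - q) / 2 * ∑ i, c i * z i ^ 2
      = ∑ i, ((3 - 2 * q) * (c i * p ^ 2) + (3 - q) / 2 * (c i * z i ^ 2)
          + 2 * p / μ * (d i * z i)) := by
        simp only [sum_add_distrib, ← mul_sum, hz, mul_zero, add_zero]
    _ ≤ ∑ i, c i * (p + z i) ^ 2 := sum_le_sum fun i _ => hterm i

theorem sum_div_sum_mul_sub_eq_sub_centerMass (hD : ∑ l, d l ≠ 0) (t : ι → ℝ) (i : ι) :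
    ∑ j, d j / (∑ l, d l) * (t i - t j) = t i - univ.centerMass d t := by
  simp only [centerMass, smul_eq_mul, mul_sub, sum_sub_distrib, ← sum_mul, ← sum_div, div_self hD,
    one_mul]
  rw [inv_mul_eq_div, sum_div]
  simp only [mul_div_right_comm]

theorem sum_mul_sub_centerMass_eq_zero (hD : ∑ l, d l ≠ 0) (t : ι → ℝ) :
    ∑ i, d i * (t i - univ.centerMass d t) = 0 := by
  simp only [centerMass, smul_eq_mul, mul_sub, sum_sub_distrib, ← sum_mul]
  field_simp
  ring

theorem sum_bounds_of_centerMass [Nonempty ι] (hμ : 0 < μ) (hq : 1 ≤ q) (hc : ∀ i, 0 ≤ c i)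
    (hd : ∀ i, 0 < d i) (hcd : ∀ i, μ * c i ≤ q * d i) (hdc : ∀ i, d i ≤ q * (μ * c i))
    (p : ℝ) (t : ι → ℝ) :
    ∑ i, ∑ j, c i * (d j / ∑ l, d l) ^ 2 * (t i - t j) ^ 2
        ≤ (1 + q) ^ 2 * ∑ i, c i * (t i - univ.centerMass d t) ^ 2 ∧
      (3 - 2 * q) * ∑ i, c i * p ^ 2 + (3 - q) / 2 * ∑ i, c i * (t i - univ.centerMass d t) ^ 2
        ≤ ∑ i, c i * (p + ∑ j, d j / (∑ l, d l) * (t i - t j)) ^ 2 := by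
  have hD : ∑ l, d l ≠ 0 := (sum_pos (fun i _ => hd i) univ_nonempty).ne'
  set z := fun i => t i - univ.centerMass d t
  constructor
  · have hz : ∀ i j, t i - t j = z i - z j := fun i j => by simp only [z]; ring
    simp only [hz]
    exact sum_sum_mul_div_sum_sq_mul_sub_sq_le hμ (by linarith) hc hd hcd hdc z
  · simp only [sum_div_sum_mul_sub_eq_sub_centerMass hD]
    exact le_sum_mul_add_sq hμ hq hcd hdc p z (sum_mul_sub_centerMass_eq_zero hD t)

end Weights

theorem Real.exp_one_fifth_le : Real.exp (1 / 5) ≤ 5 / 4 := by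
  rw [← pow_le_pow_iff_left₀ (Real.exp_pos _).le (by norm_num) (by norm_num : 5 ≠ 0),
    ← Real.exp_nat_mul]
  norm_num
  linarith [Real.exp_one_lt_three]

theorem approx.div_bounds {ε x s μ : ℝ} (hs : 0 < s) (h : approx ε (x * s) μ) :
    μ * (1 / s) ^ 2 ≤ Real.exp ε * (x / s) ∧ x / s ≤ Real.exp ε * (μ * (1 / s) ^ 2) := by
  have hxs : x * s ≤ Real.exp ε * μ := by
    have := mul_le_mul_of_nonneg_left h.1 (Real.exp_pos ε).le
    rwa [← mul_assoc, ← Real.exp_add, add_neg_cancel, Real.exp_zero, one_mul] at this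
  constructor
  · rw [show Real.exp ε * (x / s) = Real.exp ε * (x * s) * (1 / s) ^ 2 by field_simp]
    exact mul_le_mul_of_nonneg_right h.2 (by positivity)
  · rw [show x / s = x * s * (1 / s) ^ 2 by field_simp, ← mul_assoc]
    exact mul_le_mul_of_nonneg_right hxs (by positivity)

theorem sq_one_add_mul_le_and_le_of_le {q P S E : ℝ} (hq₀ : 0 ≤ q) (hq : q ≤ 5 / 4)
    (hP : 0 ≤ P) (hS : 0 ≤ S) (h : (3 - 2 * q) * P + (3 - q) / 2 * S ≤ E) :
    (1 + q) ^ 2 * S ≤ 6 * E ∧ P ≤ 2 * E := by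
  have hP' : 0 ≤ (3 - 2 * q) * P := mul_nonneg (by linarith) hP
  have hS' : 0 ≤ (3 - q) / 2 * S := mul_nonneg (by linarith) hS
  constructor
  · nlinarith [mul_nonneg (by nlinarith : 0 ≤ 3 * (3 - q) - (1 + q) ^ 2) hS]
  · nlinarith [mul_nonneg (by linarith : 0 ≤ 5 / 2 - 2 * q) hP]

theorem sum_sum_bounds_of_le {ι κ : Type*} [Fintype ι] [Nonempty ι] [Fintype κ]
    {c d t : ι → κ → ℝ} {p : κ → ℝ} {μ q ε : ℝ} (hμ : 0 < μ) (hq : 1 ≤ q) (hq' : q ≤ 5 / 4)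
    (hc : ∀ i e, 0 ≤ c i e) (hd : ∀ i e, 0 < d i e) (hcd : ∀ i e, μ * c i e ≤ q * d i e)
    (hdc : ∀ i e, d i e ≤ q * (μ * c i e))
    (h : ∑ i, ∑ e, c i e * (p e + ∑ j, d j e / (∑ l, d l e) * (t i e - t j e)) ^ 2 ≤ ε ^ 2) :
    ∑ i, ∑ j, ∑ e, c i e * (d j e / ∑ l, d l e) ^ 2 * (t i e - t j e) ^ 2 ≤ 6 * ε ^ 2 ∧
      ∑ i, ∑ e, c i e * p e ^ 2 ≤ 2 * ε ^ 2 := by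
  have hcoord e := sum_bounds_of_centerMass (c := (c · e)) (d := (d · e)) hμ hq (hc · e) (hd · e)
    (hcd · e) (hdc · e) (p e) (t · e)
  set S := ∑ e, ∑ i, c i e * (t i e - univ.centerMass (d · e) (t · e)) ^ 2
  set P := ∑ e, ∑ i, c i e * p e ^ 2
  have hPS : (3 - 2 * q) * P + (3 - q) / 2 * S ≤ ε ^ 2 := by
    rw [sum_comm] at h
    refine le_trans ?_ h
    rw [mul_sum, mul_sum, ← sum_add_distrib]
    exact sum_le_sum fun e _ => (hcoord e).2
  obtain ⟨hS6, hP2⟩ := sq_one_add_mul_le_and_le_of_le (by linarith) hq'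
    (sum_nonneg fun e _ => sum_nonneg fun i _ => mul_nonneg (hc i e) (sq_nonneg _))
    (sum_nonneg fun e _ => sum_nonneg fun i _ => mul_nonneg (hc i e) (sq_nonneg _)) hPS
  constructor
  · calc ∑ i, ∑ j, ∑ e, c i e * (d j e / ∑ l, d l e) ^ 2 * (t i e - t j e) ^ 2
        = ∑ e, ∑ i, ∑ j, c i e * (d j e / ∑ l, d l e) ^ 2 * (t i e - t j e) ^ 2 :=
          (sum_congr rfl fun i _ => sum_comm).trans sum_comm
      _ ≤ (1 + q) ^ 2 * S := by
          rw [mul_sum]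
          exact sum_le_sum fun e _ => (hcoord e).1
      _ ≤ 6 * ε ^ 2 := hS6
  · rwa [sum_comm]

theorem commodity_ipm_norm_bounds_general {m n k : ℕ}
    (A : Matrix (Fin m) (Fin n) ℝ)
    (v : Fin (k + 1) → Fin n → ℝ)
    (w : Fin m → ℝ)
    (xb sb : Fin (k + 1) → Fin m → ℝ)
    (hxb : ∀ i e, 0 < xb i e) (hsb : ∀ i e, 0 < sb i e)
    (μ : ℝ) (hμ : 0 < μ)
    (hcentered : ∀ i e, approx (1 / 5) (xb i e * sb i e) μ)
    (ε : ℝ)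
    (hyp : ∑ i, ∑ e,
        ((1 / sb i e) *
          (w e + ∑ j, (xb j e / sb j e) / (∑ l, xb l e / sb l e) *
            (A *ᵥ (v i - v j)) e)) ^ 2 ≤ ε ^ 2) :
    (∑ i, ∑ j, ∑ e,
        ((1 / sb i e) * ((xb j e / sb j e) / (∑ l, xb l e / sb l e)) *
          (A *ᵥ (v i - v j)) e) ^ 2 ≤ 6 * ε ^ 2) ∧
    (∑ i, ∑ e, (w e / sb i e) ^ 2 ≤ 2 * ε ^ 2) := by
  have hbounds i e := (hcentered i e).div_bounds (hsb i e)
  have hsplit i j e : (A *ᵥ (v i - v j)) e = (A *ᵥ v i) e - (A *ᵥ v j) e := by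
    rw [mulVec_sub, Pi.sub_apply]
  obtain ⟨hpairs, hw⟩ := sum_sum_bounds_of_le (c := fun i e => (1 / sb i e) ^ 2)
    (d := fun i e => xb i e / sb i e) (t := fun i e => (A *ᵥ v i) e) (p := w)
    hμ (Real.one_le_exp (by norm_num)) Real.exp_one_fifth_le (fun _ _ => by positivity)
    (fun i e => div_pos (hxb i e) (hsb i e)) (fun i e => (hbounds i e).1)
    (fun i e => (hbounds i e).2) (by simpa only [mul_pow, hsplit] using hyp)
  refine ⟨by simpa only [mul_pow, hsplit] using hpairs, le_of_eq_of_le ?_ hw⟩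
  exact sum_congr rfl fun i _ => sum_congr rfl fun e _ => by ring

/-- norm bounds for the multi-commodity IPM step. With
`d_i = x̄_i/s̄_i` (entrywise), `d_Σ = ∑_{i=1}^{k+1} d_i`, `v_{k+1} = 0`,
`x̄_i(e)·s̄_i(e) ≈_{1/5} μ` for all `i, e`, and the hypothesis
`∑_i ‖(1/s̄_i)(w + ∑_j (d_j/d_Σ) A(v_i − v_j))‖₂² ≤ ε²`, one has
`∑_{i,j} ‖(1/s̄_i)(d_j/d_Σ) A(v_i − v_j)‖₂² ≤ 6ε²` and `∑_i ‖w/s̄_i‖₂² ≤ 2ε²`. -/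
theorem commodity_ipm_norm_bounds {m n k : ℕ} (hk : 1 ≤ k)
    (A : Matrix (Fin m) (Fin n) ℝ)
    (v : Fin (k + 1) → Fin n → ℝ) (hvlast : v (Fin.last k) = 0)
    (w : Fin m → ℝ)
    (xb sb : Fin (k + 1) → Fin m → ℝ)
    (hxb : ∀ i e, 0 < xb i e) (hsb : ∀ i e, 0 < sb i e)
    (μ : ℝ) (hμ : 0 < μ)
    (hcentered : ∀ i e, approx (1 / 5) (xb i e * sb i e) μ)
    (ε : ℝ) (hε : 0 ≤ ε)
    (hyp : ∑ i, ∑ e,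
        ((1 / sb i e) *
          (w e + ∑ j, (xb j e / sb j e) / (∑ l, xb l e / sb l e) *
            (A *ᵥ (v i - v j)) e)) ^ 2 ≤ ε ^ 2) :
    (∑ i, ∑ j, ∑ e,
        ((1 / sb i e) * ((xb j e / sb j e) / (∑ l, xb l e / sb l e)) *
          (A *ᵥ (v i - v j)) e) ^ 2 ≤ 6 * ε ^ 2) ∧
    (∑ i, ∑ e, (w e / sb i e) ^ 2 ≤ 2 * ε ^ 2) :=
  commodity_ipm_norm_bounds_general A v w xb sb hxb hsb μ hμ hcentered ε hyp
end
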